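/- Let X₁, …, X_n be integrable real-valued random variables on (Ω, 𝓕, ℙ) with S = X₁ + ⋯ + X_n ≥ 0, and let (w_θ)_{θ ∈ (a,b)} be a family of measurable weight functions [0,∞) → [0,∞) satisfying the MLR property on the support of the distribution of S. Suppose that for each i there is a nondecreasing Borel measurable function g_i : [0,∞) → ℝ such that the conditional expectation of X_i given the σ-algebra generated by S equals g_i(S) almost surely. Let J = {θ ∈ (a,b) : E[|X_i| w_θ(S)] < ∞ for all i and 0 < E[w_θ(S)] < ∞}, and define K_i(θ) = E[X_i w_θ(S)] / E[w_θ(S)] for θ ∈ J. Then each map θ ↦ K_i(θ) is nondecreasing on J, and consequently, for every random variable Θ : Ω → J, the random vector (K₁(Θ), …, K_n(Θ)) is comonotonic. -/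

import Mathlib

/-!
Conditioning on `S` turns `E[Xᵢ w_θ(S)]` into `∫ gᵢ w_θ dμ` with `μ` the law of `S`, so the
claim is that the `w_θ`-weighted mean of the nondecreasing function `gᵢ` increases with `θ`.
For `θ₁ ≤ θ₂` this is the Chebyshev-type inequality
`∫∫ (g s - g t) (w_{θ₂} s w_{θ₁} t - w_{θ₁} s w_{θ₂} t) dμ(t) dμ(s) ≥ 0`,
whose integrand is pointwise nonnegative on `supp μ ∩ [0, ∞)` by monotonicity of `g` and MLR.
Monotone coordinates of a common parameter `Θ` are comonotonic.
-/

open MeasureTheory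

/-- The topological support of a Borel measure on ℝ: the set of points all of whose
neighbourhoods have positive measure (the smallest closed set of full measure). -/
def msupport (μ : MeasureTheory.Measure ℝ) : Set ℝ := {x : ℝ | ∀ U ∈ nhds x, μ U ≠ 0}

/-- A finite family of real random variables is comonotonic if all pairwise increments
move in the same direction. -/
def Comonotonic {Ω : Type*} {n : ℕ} (H : Fin n → Ω → ℝ) : Prop :=
  ∀ i j : Fin n, ∀ ω ω' : Ω, 0 ≤ (H i ω - H i ω') * (H j ω - H j ω')

lemma ae_mem_msupport (μ : Measure ℝ) : ∀ᵐ x ∂μ, x ∈ msupport μ := by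
  refine mem_ae_iff.2 (measure_null_of_locally_null _ fun x hx => ?_)
  simp only [msupport, Set.mem_compl_iff, Set.mem_ofPred_eq, not_forall, not_not] at hx
  obtain ⟨U, hU, hU0⟩ := hx
  exact ⟨U, mem_nhdsWithin_of_mem_nhds hU, hU0⟩

section Correlation

variable {α : Type*} {T : Set α} {g w₁ w₂ : α → ℝ}

lemma sub_mul_sub_nonneg_of_monotoneOn_of_mlr [LinearOrder α] (hg : MonotoneOn g T)
    (hmlr : ∀ s₁ ∈ T, ∀ s₂ ∈ T, s₁ ≤ s₂ → w₂ s₁ * w₁ s₂ ≤ w₂ s₂ * w₁ s₁)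
    {s t : α} (hs : s ∈ T) (ht : t ∈ T) :
    0 ≤ (g s - g t) * (w₂ s * w₁ t - w₁ s * w₂ t) := by
  rcases le_total t s with h | h
  · have := hmlr t ht s hs h
    exact mul_nonneg (sub_nonneg.2 (hg ht hs h)) (by linarith)
  · have := hmlr s hs t ht h
    exact mul_nonneg_of_nonpos_of_nonpos (sub_nonpos.2 (hg hs ht h)) (by linarith)

variable [MeasurableSpace α] {μ : Measure α}

lemma integral_sub_mul_sub_eq (hgw₁ : Integrable (fun t => g t * w₁ t) μ)
    (hgw₂ : Integrable (fun t => g t * w₂ t) μ) (hw₁ : Integrable w₁ μ)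
    (hw₂ : Integrable w₂ μ) (s : α) :
    ∫ t, (g s - g t) * (w₂ s * w₁ t - w₁ s * w₂ t) ∂μ =
      g s * w₂ s * ∫ t, w₁ t ∂μ - g s * w₁ s * ∫ t, w₂ t ∂μ
        - w₂ s * ∫ t, g t * w₁ t ∂μ + w₁ s * ∫ t, g t * w₂ t ∂μ := by
  have hexpand : (fun t => (g s - g t) * (w₂ s * w₁ t - w₁ s * w₂ t)) =
      fun t => (g s * w₂ s * w₁ t - g s * w₁ s * w₂ t)
        - (w₂ s * (g t * w₁ t) - w₁ s * (g t * w₂ t)) := by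
    funext t; ring
  rw [hexpand, integral_sub, integral_sub, integral_sub]
  · simp only [integral_const_mul]
    ring
  all_goals fun_prop

lemma integral_mul_integral_le_of_monotoneOn_of_mlr [LinearOrder α] (hT : ∀ᵐ t ∂μ, t ∈ T)
    (hg : MonotoneOn g T)
    (hmlr : ∀ s₁ ∈ T, ∀ s₂ ∈ T, s₁ ≤ s₂ → w₂ s₁ * w₁ s₂ ≤ w₂ s₂ * w₁ s₁)
    (hgw₁ : Integrable (fun s => g s * w₁ s) μ) (hgw₂ : Integrable (fun s => g s * w₂ s) μ)
    (hw₁ : Integrable w₁ μ) (hw₂ : Integrable w₂ μ) :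
    (∫ s, g s * w₁ s ∂μ) * (∫ s, w₂ s ∂μ) ≤ (∫ s, g s * w₂ s ∂μ) * (∫ s, w₁ s ∂μ) := by
  set A₁ := ∫ s, g s * w₁ s ∂μ
  set A₂ := ∫ s, g s * w₂ s ∂μ
  set B₁ := ∫ s, w₁ s ∂μ
  set B₂ := ∫ s, w₂ s ∂μ
  have hinner_nonneg : ∀ᵐ s ∂μ,
      0 ≤ g s * w₂ s * B₁ - g s * w₁ s * B₂ - w₂ s * A₁ + w₁ s * A₂ := by
    filter_upwards [hT] with s hs
    rw [← integral_sub_mul_sub_eq hgw₁ hgw₂ hw₁ hw₂]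
    refine integral_nonneg_of_ae ?_
    filter_upwards [hT] with t ht
    exact sub_mul_sub_nonneg_of_monotoneOn_of_mlr hg hmlr hs ht
  have hdouble : 0 ≤ ∫ s, g s * w₂ s * B₁ - g s * w₁ s * B₂ - w₂ s * A₁ + w₁ s * A₂ ∂μ :=
    integral_nonneg_of_ae hinner_nonneg
  rw [integral_add, integral_sub, integral_sub] at hdouble
  · simp only [integral_mul_const] at hdouble
    linarith
  all_goals fun_prop

end Correlation

section Conditioning

variable {Ω β : Type*} [MeasurableSpace Ω] [MeasurableSpace β] {P : Measure Ω}
  {X : Ω → ℝ} {S : Ω → β} {g w : β → ℝ}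

lemma condExp_mul_comp_ae_eq (hw : Measurable w) (hX : Integrable X P)
    (hXw : Integrable (fun ω => X ω * w (S ω)) P)
    (hcond : P[X | MeasurableSpace.comap S inferInstance] =ᵐ[P] fun ω => g (S ω)) :
    P[fun ω => X ω * w (S ω) | MeasurableSpace.comap S inferInstance] =ᵐ[P]
      fun ω => g (S ω) * w (S ω) := by
  have hwS : StronglyMeasurable[MeasurableSpace.comap S inferInstance] (fun ω => w (S ω)) :=
    (hw.comp (comap_measurable S)).stronglyMeasurable
  refine (condExp_mul_of_stronglyMeasurable_right hwS hXw hX).trans ?_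
  filter_upwards [hcond] with ω hω
  rw [Pi.mul_apply, hω]

lemma integrable_mul_of_integrable_abs_mul {c : Ω → ℝ} (hX : AEStronglyMeasurable X P)
    (hc : AEStronglyMeasurable c P) (hc0 : ∀ ω, 0 ≤ c ω)
    (h : Integrable (fun ω => |X ω| * c ω) P) : Integrable (fun ω => X ω * c ω) P :=
  h.mono' (hX.mul hc) (.of_forall fun ω => by
    rw [Real.norm_eq_abs, abs_mul, abs_of_nonneg (hc0 ω)])

variable [IsFiniteMeasure P]

lemma integrable_map_and_integral_mul_comp_eq (hS : Measurable S) (hg : Measurable g)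
    (hw : Measurable w) (hX : Integrable X P) (hXw : Integrable (fun ω => X ω * w (S ω)) P)
    (hcond : P[X | MeasurableSpace.comap S inferInstance] =ᵐ[P] fun ω => g (S ω)) :
    Integrable (fun s => g s * w s) (P.map S) ∧
      ∫ ω, X ω * w (S ω) ∂P = ∫ s, g s * w s ∂(P.map S) := by
  have hm := hS.comap_le
  have hgw := (hg.mul hw).aestronglyMeasurable (μ := P.map S)
  have hpull := condExp_mul_comp_ae_eq hw hX hXw hcond
  refine ⟨(integrable_map_measure hgw hS.aemeasurable).2
      (integrable_condExp.congr hpull), ?_⟩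
  have := isFiniteMeasure_trim (μ := P) hm
  calc ∫ ω, X ω * w (S ω) ∂P
      = ∫ ω, (P[fun ω => X ω * w (S ω) | MeasurableSpace.comap S inferInstance]) ω ∂P :=
        (integral_condExp hm).symm
    _ = ∫ ω, g (S ω) * w (S ω) ∂P := integral_congr_ae hpull
    _ = ∫ s, g s * w s ∂(P.map S) := (integral_map hS.aemeasurable hgw).symm

end Conditioning

lemma comonotonic_of_monotoneOn {Ω : Type*} {n : ℕ} {J : Set ℝ} {K : Fin n → ℝ → ℝ}
    (hK : ∀ i, MonotoneOn (K i) J) {Θ : Ω → ℝ} (hΘ : ∀ ω, Θ ω ∈ J) :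
    Comonotonic (fun i ω => K i (Θ ω)) := by
  intro i j ω ω'
  rcases le_total (Θ ω') (Θ ω) with h | h
  · exact mul_nonneg (sub_nonneg.2 (hK i (hΘ ω') (hΘ ω) h))
      (sub_nonneg.2 (hK j (hΘ ω') (hΘ ω) h))
  · exact mul_nonneg_of_nonpos_of_nonpos (sub_nonpos.2 (hK i (hΘ ω) (hΘ ω') h))
      (sub_nonpos.2 (hK j (hΘ ω) (hΘ ω') h))

theorem stmt13_general {Ω : Type*} [MeasurableSpace Ω] (P : Measure Ω) [IsProbabilityMeasure P]
    (n : ℕ) (X : Fin n → Ω → ℝ) (hXmeas : ∀ i, Measurable (X i))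
    (hXint : ∀ i, Integrable (X i) P)
    (S : Ω → ℝ) (hSdef : S = fun ω => ∑ i, X i ω) (hS0 : ∀ ω, 0 ≤ S ω)
    (a b : EReal)
    (w : ℝ → ℝ → ℝ)
    (hwmeas : ∀ θ : ℝ, (θ : EReal) ∈ Set.Ioo a b → Measurable (w θ))
    (hw0 : ∀ θ : ℝ, (θ : EReal) ∈ Set.Ioo a b → ∀ s, 0 ≤ w θ s)
    (hMLR : ∀ θ₁ θ₂ : ℝ, (θ₁ : EReal) ∈ Set.Ioo a b → (θ₂ : EReal) ∈ Set.Ioo a b → θ₁ ≤ θ₂ →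
      ∀ s₁ ∈ msupport (P.map S), ∀ s₂ ∈ msupport (P.map S), s₁ ≤ s₂ →
        w θ₂ s₁ * w θ₁ s₂ ≤ w θ₂ s₂ * w θ₁ s₁)
    (g : Fin n → ℝ → ℝ)
    (hgmono : ∀ i, MonotoneOn (g i) (Set.Ici 0)) (hgmeas : ∀ i, Measurable (g i))
    (hcond : ∀ i, MeasureTheory.condExp (MeasurableSpace.comap S inferInstance) P (X i)
      =ᵐ[P] fun ω => g i (S ω))
    (J : Set ℝ)
    (hJ : J = {θ : ℝ | (θ : EReal) ∈ Set.Ioo a b ∧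
      (∀ i, Integrable (fun ω => |X i ω| * w θ (S ω)) P) ∧
      Integrable (fun ω => w θ (S ω)) P ∧ 0 < ∫ ω, w θ (S ω) ∂P}) :
    (∀ i : Fin n, ∀ θ₁ ∈ J, ∀ θ₂ ∈ J, θ₁ ≤ θ₂ →
      (∫ ω, X i ω * w θ₁ (S ω) ∂P) / (∫ ω, w θ₁ (S ω) ∂P) ≤
        (∫ ω, X i ω * w θ₂ (S ω) ∂P) / (∫ ω, w θ₂ (S ω) ∂P)) ∧
    (∀ Θ : Ω → ℝ, (∀ ω, Θ ω ∈ J) →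
      Comonotonic (fun (i : Fin n) (ω : Ω) =>
        (∫ ω', X i ω' * w (Θ ω) (S ω') ∂P) / (∫ ω', w (Θ ω) (S ω') ∂P))) := by
  have hS : Measurable S := hSdef ▸ Finset.measurable_sum _ fun i _ => hXmeas i
  set μ := P.map S
  have hsupp : ∀ᵐ s ∂μ, s ∈ msupport μ ∩ Set.Ici 0 :=
    (ae_mem_msupport μ).and
      ((ae_map_iff hS.aemeasurable measurableSet_Ici).2 (.of_forall hS0))
  have hlaw : ∀ i, ∀ θ ∈ J, Integrable (fun s => g i s * w θ s) μ ∧ Integrable (w θ) μ ∧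
      ∫ ω, X i ω * w θ (S ω) ∂P = ∫ s, g i s * w θ s ∂μ ∧
      ∫ ω, w θ (S ω) ∂P = ∫ s, w θ s ∂μ := by
    intro i θ hθ
    rw [hJ] at hθ
    obtain ⟨hθab, hXw, hw, -⟩ := hθ
    have hwm := hwmeas θ hθab
    have hXw' := integrable_mul_of_integrable_abs_mul (hXint i).aestronglyMeasurable
      (hwm.comp hS).aestronglyMeasurable (fun ω => hw0 θ hθab (S ω)) (hXw i)
    obtain ⟨hgw, hE⟩ :=
      integrable_map_and_integral_mul_comp_eq hS (hgmeas i) hwm (hXint i) hXw' (hcond i)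
    exact ⟨hgw, (integrable_map_measure hwm.aestronglyMeasurable hS.aemeasurable).2 hw, hE,
      (integral_map hS.aemeasurable hwm.aestronglyMeasurable).symm⟩
  have hmono : ∀ i, MonotoneOn
      (fun θ => (∫ ω, X i ω * w θ (S ω) ∂P) / ∫ ω, w θ (S ω) ∂P) J := by
    intro i θ₁ hθ₁ θ₂ hθ₂ hle
    obtain ⟨hgw₁, hw₁, hE₁, hN₁⟩ := hlaw i θ₁ hθ₁
    obtain ⟨hgw₂, hw₂, hE₂, hN₂⟩ := hlaw i θ₂ hθ₂
    rw [hJ] at hθ₁ hθ₂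
    rw [div_le_div_iff₀ hθ₁.2.2.2 hθ₂.2.2.2, hE₁, hE₂, hN₁, hN₂]
    exact integral_mul_integral_le_of_monotoneOn_of_mlr hsupp
      ((hgmono i).mono Set.inter_subset_right)
      (fun s₁ hs₁ s₂ hs₂ => hMLR θ₁ θ₂ hθ₁.1 hθ₂.1 hle s₁ hs₁.1 s₂ hs₂.1) hgw₁ hgw₂ hw₁ hw₂
  exact ⟨hmono, fun Θ hΘ => comonotonic_of_monotoneOn hmono hΘ⟩

/-- (Proposition 5.2 of the paper.) Under the MLR property of the weight
family on the support of the distribution of `S = Σ Xᵢ ≥ 0`, and assuming the conditional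
expectations `E[Xᵢ | S] = gᵢ(S)` with nondecreasing `gᵢ`, the weighted allocations
`Kᵢ(θ) = E[Xᵢ w_θ(S)] / E[w_θ(S)]` are nondecreasing in `θ` on the set `J` where they are
well defined; consequently `(K₁(Θ), …, K_n(Θ))` is comonotonic for any `Θ` valued in `J`. -/
theorem stmt13 {Ω : Type*} [MeasurableSpace Ω] (P : Measure Ω) [IsProbabilityMeasure P]
    (n : ℕ) (X : Fin n → Ω → ℝ) (hXmeas : ∀ i, Measurable (X i))
    (hXint : ∀ i, Integrable (X i) P)
    (S : Ω → ℝ) (hSdef : S = fun ω => ∑ i, X i ω) (hS0 : ∀ ω, 0 ≤ S ω)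
    (a b : EReal) (hab : a < b)
    (w : ℝ → ℝ → ℝ)
    (hwmeas : ∀ θ : ℝ, (θ : EReal) ∈ Set.Ioo a b → Measurable (w θ))
    (hw0 : ∀ θ : ℝ, (θ : EReal) ∈ Set.Ioo a b → ∀ s, 0 ≤ w θ s)
    (hMLR : ∀ θ₁ θ₂ : ℝ, (θ₁ : EReal) ∈ Set.Ioo a b → (θ₂ : EReal) ∈ Set.Ioo a b → θ₁ ≤ θ₂ →
      ∀ s₁ ∈ msupport (P.map S), ∀ s₂ ∈ msupport (P.map S), s₁ ≤ s₂ →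
        w θ₂ s₁ * w θ₁ s₂ ≤ w θ₂ s₂ * w θ₁ s₁)
    (g : Fin n → ℝ → ℝ)
    (hgmono : ∀ i, MonotoneOn (g i) (Set.Ici 0)) (hgmeas : ∀ i, Measurable (g i))
    (hcond : ∀ i, MeasureTheory.condExp (MeasurableSpace.comap S inferInstance) P (X i)
      =ᵐ[P] fun ω => g i (S ω))
    (J : Set ℝ)
    (hJ : J = {θ : ℝ | (θ : EReal) ∈ Set.Ioo a b ∧
      (∀ i, Integrable (fun ω => |X i ω| * w θ (S ω)) P) ∧
      Integrable (fun ω => w θ (S ω)) P ∧ 0 < ∫ ω, w θ (S ω) ∂P}) :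
    (∀ i : Fin n, ∀ θ₁ ∈ J, ∀ θ₂ ∈ J, θ₁ ≤ θ₂ →
      (∫ ω, X i ω * w θ₁ (S ω) ∂P) / (∫ ω, w θ₁ (S ω) ∂P) ≤
        (∫ ω, X i ω * w θ₂ (S ω) ∂P) / (∫ ω, w θ₂ (S ω) ∂P)) ∧
    (∀ Θ : Ω → ℝ, (∀ ω, Θ ω ∈ J) →
      Comonotonic (fun (i : Fin n) (ω : Ω) =>
        (∫ ω', X i ω' * w (Θ ω) (S ω') ∂P) / (∫ ω', w (Θ ω) (S ω') ∂P))) :=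
  stmt13_general P n X hXmeas hXint S hSdef hS0 a b w hwmeas hw0 hMLR g hgmono hgmeas hcond J hJ
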